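/- Let T be a finite unrooted tree whose set of 'bad' leaves all carry a common tag, with ℓ ≥ 2 bad leaves, and suppose every path connecting two tagged leaves has cost 1 while a path covering a single bad node has cost 1. Then the minimum total cost of a set of paths covering all bad nodes of T, where a path between two leaves sharing a tag costs 1, is ⌈ℓ/2⌉. -/

import Mathlib

/-!
A leaf lying on a path is one of its two ends, so a cover of the bad nodes (which include the
`ℓ` leaves) has at least `⌈ℓ/2⌉` paths, each of cost at least `1`.

Conversely, let `c` minimise the total distance to the leaves. Moving from `c` to a neighbour
would otherwise pay off, so each branch of the tree at `c` holds at most half of the leaves.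
Hence the leaves can be paired off, one of them twice when `ℓ` is odd, so that the two leaves of
each pair lie in different branches. The path joining such a pair runs through `c`, and every
node lies on the path from `c` to some leaf, so these `⌈ℓ/2⌉` paths cover the tree; each costs
`1` because its ends are leaves sharing the tag `t`.
-/

/-- The cost of a covering path in a tagged component tree: a *short* path (containing
at most one bad node) costs `1`; a *long* path (containing at least two bad nodes)
costs `1` if its two endpoints share a tag (*indel-saving*) and `2` otherwise
(*indel-neutral*). Tags are drawn from a two-element set, modelled by `Bool`. -/
noncomputable def pathCost {V : Type} {G : SimpleGraph V} (bad : V → Prop)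
    (tag : V → Finset Bool) {x y : V} (p : G.Walk x y) : ℕ :=
  if 2 ≤ {v | v ∈ p.support ∧ bad v}.ncard then
    (if ((tag x) ∩ (tag y)).Nonempty then 1 else 2)
  else 1

/-- The set of possible total costs of covers of a tagged component tree: a cover is a
finite family of paths such that every bad node lies on at least one of them. -/
noncomputable def CoverCosts {V : Type} (G : SimpleGraph V) (bad : V → Prop)
    (tag : V → Finset Bool) : Set ℕ :=
  {c | ∃ (k : ℕ) (x y : Fin k → V) (p : ∀ i, G.Walk (x i) (y i)),
    (∀ i, (p i).IsPath) ∧ (∀ v, bad v → ∃ i, v ∈ (p i).support) ∧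
    c = ∑ i, pathCost bad tag (p i)}

open Finset

section Pairing

variable {α β : Type*}

def IsCrossPairing (f : α → β) (L : Finset α) (ps : List (α × α)) : Prop :=
  (∀ q ∈ ps, q.1 ∈ L ∧ q.2 ∈ L ∧ f q.1 ≠ f q.2) ∧ ∀ l ∈ L, ∃ q ∈ ps, l = q.1 ∨ l = q.2

theorem IsCrossPairing.cons [DecidableEq α] {f : α → β} {L M : Finset α} {ps : List (α × α)}
    {a b : α} (h : IsCrossPairing f M ps) (hML : M ⊆ L) (ha : a ∈ L) (hb : b ∈ L)
    (hab : f a ≠ f b)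
    (hLM : L ⊆ insert a (insert b M)) : IsCrossPairing f L ((a, b) :: ps) := by
  refine ⟨?_, fun l hl => ?_⟩
  · rintro q (_ | ⟨_, hq⟩)
    · exact ⟨ha, hb, hab⟩
    · obtain ⟨h1, h2, h3⟩ := h.1 q hq
      exact ⟨hML h1, hML h2, h3⟩
  · rcases mem_insert.mp (hLM hl) with rfl | hl
    · exact ⟨(l, b), List.mem_cons_self, .inl rfl⟩
    rcases mem_insert.mp hl with rfl | hl
    · exact ⟨(a, l), List.mem_cons_self, .inr rfl⟩
    obtain ⟨q, hq, hlq⟩ := h.2 l hl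
    exact ⟨q, List.mem_cons_of_mem _ hq, hlq⟩

theorem card_fiber_lt_of_notMem [DecidableEq β] {f : α → β} {L M : Finset α} {x : α}
    (hML : M ⊆ L) (hx : x ∈ L) (hxM : x ∉ M) : #{l ∈ M | f l = f x} < #{l ∈ L | f l = f x} :=
  card_lt_card <| (ssubset_iff_of_subset (filter_subset_filter _ hML)).mpr
    ⟨x, mem_filter.mpr ⟨hx, rfl⟩, fun h => hxM (mem_filter.mp h).1⟩

theorem card_fiber_add_add_le [DecidableEq β] (f : α → β) (L : Finset α) {u v w : β}
    (huv : u ≠ v) (huw : u ≠ w) (hvw : v ≠ w) :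
    #{l ∈ L | f l = u} + #{l ∈ L | f l = v} + #{l ∈ L | f l = w} ≤ #L := by
  have h := sum_card_fiberwise_eq_card_filter L {u, v, w} f
  rw [sum_insert (by simp [huv, huw]), sum_pair hvw] at h
  have := card_filter_le L (f · ∈ ({u, v, w} : Finset β))
  omega

/-- Removing one element from each of the two largest fibres keeps every fibre at most half. -/
theorem exists_erase_erase_fiber_le [DecidableEq α] [DecidableEq β] {f : α → β} {L : Finset α}
    (hL : 2 ≤ #L) (heven : Even #L) (hf : ∀ u, 2 * #{l ∈ L | f l = u} ≤ #L) :
    ∃ a ∈ L, ∃ b ∈ L, f a ≠ f b ∧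
      ∀ u, 2 * #{l ∈ (L.erase a).erase b | f l = u} ≤ #((L.erase a).erase b) := by
  obtain ⟨a, ha, hamax⟩ := L.exists_max_image (fun x => #{l ∈ L | f l = f x})
    (card_pos.mp (by omega))
  have hrest : ({x ∈ L | ¬f x = f a}).Nonempty := by
    rw [← card_pos]
    have := card_filter_add_card_filter_not (s := L) (fun x => f x = f a)
    have := hf (f a)
    omega
  obtain ⟨b, hb, hbmax⟩ := exists_max_image _ (fun x => #{l ∈ L | f l = f x}) hrest
  obtain ⟨hbL, hba⟩ := mem_filter.mp hb
  refine ⟨a, ha, b, hbL, Ne.symm hba, fun u => ?_⟩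
  set M := (L.erase a).erase b
  have hML : M ⊆ L := (erase_subset _ _).trans (erase_subset _ _)
  have hM : #M = #L - 2 := by
    rw [card_erase_of_mem (mem_erase.mpr ⟨fun h => hba (congrArg f h), hbL⟩),
      card_erase_of_mem ha]
    omega
  have haM : a ∉ M := fun h => (mem_erase.mp (mem_erase.mp h).2).1 rfl
  have hbM : b ∉ M := fun h => (mem_erase.mp h).1 rfl
  rw [hM]
  obtain ⟨r, hr⟩ := heven
  by_cases hua : u = f a
  · subst hua
    have := card_fiber_lt_of_notMem hML ha haM (f := f)
    have := hf (f a)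
    omega
  by_cases hub : u = f b
  · subst hub
    have := card_fiber_lt_of_notMem hML hbL hbM (f := f)
    have := hamax b hbL
    have := hf (f a)
    omega
  obtain hu | ⟨w, hw⟩ := ({l ∈ L | f l = u}).eq_empty_or_nonempty
  · have := card_le_card (filter_subset_filter (fun l => f l = u) hML)
    rw [hu, card_empty] at this
    omega
  obtain ⟨hwL, rfl⟩ := mem_filter.mp hw
  have := card_le_card (filter_subset_filter (fun l => f l = f w) hML)
  have := hamax w hwL
  have := hbmax w (mem_filter.mpr ⟨hwL, hua⟩)
  have := card_fiber_add_add_le f L hba (Ne.symm hub) (Ne.symm hua)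
  omega

theorem exists_isCrossPairing_of_even [DecidableEq α] [DecidableEq β] (f : α → β)
    (L : Finset α) (heven : Even #L) (hf : ∀ u, 2 * #{l ∈ L | f l = u} ≤ #L) :
    ∃ ps, 2 * List.length ps = #L ∧ IsCrossPairing f L ps := by
  induction hn : #L using Nat.strong_induction_on generalizing L with
  | _ n ih =>
  subst hn
  obtain hL | hL := Nat.lt_or_ge #L 2
  · have hL0 : L = ∅ := card_eq_zero.mp (by obtain ⟨r, hr⟩ := heven; omega)
    subst hL0
    exact ⟨[], rfl, by simp [IsCrossPairing]⟩
  obtain ⟨a, ha, b, hb, hab, hM⟩ := exists_erase_erase_fiber_le hL heven hf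
  have hbea : b ∈ L.erase a := mem_erase.mpr ⟨fun h => hab (congrArg f h.symm), hb⟩
  have hcard : #((L.erase a).erase b) + 2 = #L := by
    rw [card_erase_of_mem hbea, card_erase_of_mem ha]
    omega
  obtain ⟨ps, hlen, hps⟩ := ih _ (by omega) _
    (by obtain ⟨r, hr⟩ := heven; exact ⟨r - 1, by omega⟩) hM rfl
  refine ⟨(a, b) :: ps, by simp only [List.length_cons]; omega,
    hps.cons ((erase_subset _ _).trans (erase_subset _ _)) ha hb hab ?_⟩
  rw [insert_erase hbea, insert_erase ha]

theorem exists_isCrossPairing [DecidableEq α] [DecidableEq β] (f : α → β) (L : Finset α)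
    (hf : ∀ u, 2 * #{l ∈ L | f l = u} ≤ #L) :
    ∃ ps, List.length ps = (#L + 1) / 2 ∧ IsCrossPairing f L ps := by
  obtain heven | hodd := Nat.even_or_odd #L
  · obtain ⟨ps, hlen, hps⟩ := exists_isCrossPairing_of_even f L heven hf
    exact ⟨ps, by obtain ⟨r, hr⟩ := heven; omega, hps⟩
  obtain ⟨a, ha⟩ := card_pos.mp hodd.pos
  obtain ⟨b, hb, hab⟩ : ∃ b ∈ L, f a ≠ f b := by
    by_contra! h
    have hfa := hf (f a)
    rw [filter_true_of_mem fun l hl => (h l hl).symm] at hfa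
    have := hodd.pos
    omega
  have hcard : #(L.erase a) + 1 = #L := card_erase_add_one ha
  obtain ⟨ps, hlen, hps⟩ := exists_isCrossPairing_of_even f (L.erase a)
    (by obtain ⟨r, hr⟩ := hodd; exact ⟨r, by omega⟩) (fun u => by
      have := card_le_card (filter_subset_filter (fun l => f l = u) (erase_subset a L))
      have := hf u
      obtain ⟨r, hr⟩ := hodd
      omega)
  refine ⟨(a, b) :: ps, by simp only [List.length_cons]; omega,
    hps.cons (erase_subset a L) ha hb hab ?_⟩
  exact (insert_erase ha).symm.subset.trans (insert_subset_insert a (subset_insert b _))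

end Pairing

namespace SimpleGraph

variable {V : Type*} {G : SimpleGraph V}

theorem Walk.IsPath.eq_or_eq_of_degree_eq_one [Fintype V] [DecidableRel G.Adj] {u w v : V}
    {p : G.Walk u w} (hp : p.IsPath) (hv : v ∈ p.support) (hd : G.degree v = 1) :
    v = u ∨ v = w := by
  obtain ⟨n, rfl, hn⟩ := Walk.mem_support_iff_exists_getVert.mp hv
  by_contra! hend
  have h0 : 0 < n := Nat.pos_of_ne_zero fun h => hend.1 (by rw [h, Walk.getVert_zero])
  have hlt : n < p.length := lt_of_le_of_ne hn fun h => hend.2 (by rw [h, Walk.getVert_length])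
  obtain ⟨x, -, hx⟩ := degree_eq_one_iff_existsUnique_adj.mp hd
  have hprev : G.Adj (p.getVert n) (p.getVert (n - 1)) := by
    simpa [Nat.sub_add_cancel h0] using (p.adj_getVert_succ (i := n - 1) (by omega)).symm
  have hnext := p.adj_getVert_succ hlt
  have := hp.getVert_injOn (by simp only [Set.mem_ofPred_eq]; omega)
    (by simp only [Set.mem_ofPred_eq]; omega) ((hx _ hprev).trans (hx _ hnext).symm)
  omega

/-- Stepping from `c` to `u` gains `1` on every `l` counted and loses at most `1` on the rest. -/
theorem Connected.two_mul_card_filter_dist_lt_le (hG : G.Connected) {L : Finset V} {c u : V}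
    (hc : ∀ w, ∑ l ∈ L, G.dist c l ≤ ∑ l ∈ L, G.dist w l) (hu : G.Adj c u) :
    2 * #{l ∈ L | G.dist u l < G.dist c l} ≤ #L := by
  have key : ∑ l ∈ L, (G.dist u l + 2 * if G.dist u l < G.dist c l then 1 else 0) ≤
      ∑ l ∈ L, (G.dist c l + 1) := by
    refine sum_le_sum fun l _ => ?_
    have := hG.dist_triangle (u := u) (v := c) (w := l)
    have := dist_eq_one_iff_adj.mpr hu.symm
    split_ifs <;> omega
  rw [sum_add_distrib, sum_add_distrib, ← mul_sum, ← card_filter, sum_const, smul_eq_mul,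
    mul_one] at key
  linarith [hc u]

namespace IsTree

variable (hT : G.IsTree)

noncomputable def path (a b : V) : G.Walk a b := (hT.existsUnique_path a b).exists.choose

theorem isPath_path (a b : V) : (hT.path a b).IsPath :=
  (hT.existsUnique_path a b).exists.choose_spec

variable {hT} in
theorem eq_path {a b : V} {p : G.Walk a b} (hp : p.IsPath) : p = hT.path a b :=
  (hT.existsUnique_path a b).unique hp (hT.isPath_path a b)

@[simp] theorem path_self (a : V) : hT.path a a = .nil := (eq_path .nil).symm

theorem length_path (a b : V) : (hT.path a b).length = G.dist a b := by
  obtain ⟨p, hp⟩ := hT.connected.exists_walk_length_eq_dist a b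
  rw [← eq_path (p.isPath_of_length_eq_dist hp), hp]

theorem snd_path_eq_self_iff {c l : V} : (hT.path c l).snd = c ↔ l = c := by
  refine ⟨fun h => ?_, fun h => by subst h; simp⟩
  by_contra hlc
  exact (Walk.adj_snd (Walk.not_nil_of_ne (Ne.symm hlc))).ne h.symm

theorem dist_snd_path_lt {c l : V} (hlc : l ≠ c) : G.dist (hT.path c l).snd l < G.dist c l := by
  have hnil := Walk.not_nil_of_ne (p := hT.path c l) (Ne.symm hlc)
  have := dist_le (hT.path c l).tail
  rw [← hT.length_path c l, ← Walk.length_tail_add_one hnil]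
  omega

theorem snd_path_of_mem_support [DecidableEq V] {c a x : V} (hx : x ∈ (hT.path c a).support)
    (hxc : x ≠ c) : (hT.path c x).snd = (hT.path c a).snd := by
  rw [← eq_path ((hT.isPath_path c a).takeUntil hx)]
  exact Walk.snd_takeUntil hxc _ hx

/-- If `a` and `b` leave `c` through different neighbours, the path from `a` to `b` passes
through `c`. -/
theorem mem_support_path_of_snd_ne [DecidableEq V] {c a b v : V}
    (hab : (hT.path c a).snd ≠ (hT.path c b).snd)
    (hv : v ∈ (hT.path c a).support ∨ v ∈ (hT.path c b).support) :
    v ∈ (hT.path a b).support := by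
  have hcb := (hT.isPath_path c b).support_nodup
  rw [← Walk.cons_tail_support] at hcb
  have hjoin : ((hT.path c a).reverse.append (hT.path c b)).IsPath := by
    rw [Walk.isPath_def, Walk.support_append, Walk.support_reverse, List.nodup_append]
    refine ⟨List.nodup_reverse.mpr (hT.isPath_path c a).support_nodup,
      (List.nodup_cons.mp hcb).2, fun x hxa x' hxb hxx => ?_⟩
    subst hxx
    have hxc : x ≠ c := fun h => (List.nodup_cons.mp hcb).1 (h ▸ hxb)
    rw [List.mem_reverse] at hxa
    exact hab ((hT.snd_path_of_mem_support hxa hxc).symm.trans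
      (hT.snd_path_of_mem_support (List.mem_of_mem_tail hxb) hxc))
  rw [← eq_path hjoin, Walk.mem_support_append_iff, Walk.support_reverse, List.mem_reverse]
  exact hv

theorem exists_degree_eq_one_mem_support_path [Fintype V] [DecidableRel G.Adj] [Nontrivial V]
    (c v : V) : ∃ l, G.degree l = 1 ∧ v ∈ (hT.path c l).support := by
  by_cases hvc : v = c
  · obtain ⟨l, hl⟩ := hT.exists_vert_degree_one_of_nontrivial
    exact ⟨l, hl, hvc ▸ Walk.start_mem_support _⟩
  classical
  obtain ⟨l, hl, hmax⟩ := exists_max_image {w | v ∈ (hT.path c w).support}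
    (fun w => (hT.path c w).length) ⟨v, mem_filter.mpr ⟨mem_univ _, Walk.end_mem_support _⟩⟩
  rw [mem_filter] at hl
  refine ⟨l, ?_, hl.2⟩
  have hlc : l ≠ c := by
    rintro rfl
    simp only [path_self, Walk.support_nil, List.mem_singleton] at hl
    exact hvc hl.2
  have hnil := Walk.not_nil_of_ne (p := hT.path c l) (Ne.symm hlc)
  by_contra hdeg
  obtain ⟨u, hlu, hu⟩ : ∃ u, G.Adj l u ∧ u ≠ (hT.path c l).penultimate := by
    by_contra! h
    exact hdeg (degree_eq_one_iff_existsUnique_adj.mpr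
      ⟨_, (Walk.adj_penultimate hnil).symm, h⟩)
  have hext := (hT.isPath_path c l).concat
    (fun hmem => hu (hT.isAcyclic.eq_penultimate_of_adj_end (hT.isPath_path c l) hlu hmem)) hlu
  have := hmax u (by
    rw [mem_filter, ← eq_path hext, Walk.support_concat]
    exact ⟨mem_univ _, List.mem_append_left _ hl.2⟩)
  rw [← eq_path hext, Walk.length_concat] at this
  omega

/-- `(hT.path c l).snd` names the branch at `c` containing `l`; at a median `c` of `L` no branch
holds more than half of `L`. -/
theorem two_mul_card_filter_snd_path_le [DecidableEq V] {L : Finset V} (hL : 2 ≤ #L) {c : V}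
    (hc : ∀ w, ∑ l ∈ L, G.dist c l ≤ ∑ l ∈ L, G.dist w l) (u : V) :
    2 * #{l ∈ L | (hT.path c l).snd = u} ≤ #L := by
  by_cases huc : u = c
  · subst huc
    have : {l ∈ L | (hT.path u l).snd = u} ⊆ {u} := fun l hl =>
      mem_singleton.mpr (hT.snd_path_eq_self_iff.mp (mem_filter.mp hl).2)
    have := card_le_card this
    rw [card_singleton] at this
    omega
  have hne : ∀ l ∈ {l ∈ L | (hT.path c l).snd = u}, l ≠ c := fun l hl hlc =>
    huc (by rw [← (mem_filter.mp hl).2, hT.snd_path_eq_self_iff.mpr hlc])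
  obtain hempty | ⟨l₀, hl₀⟩ := ({l ∈ L | (hT.path c l).snd = u}).eq_empty_or_nonempty
  · simp [hempty]
  have hadj : G.Adj c u :=
    (mem_filter.mp hl₀).2 ▸ Walk.adj_snd (Walk.not_nil_of_ne (Ne.symm (hne l₀ hl₀)))
  refine le_trans ?_ (hT.connected.two_mul_card_filter_dist_lt_le hc hadj)
  gcongr with l hl
  intro hlu
  exact hlu ▸ hT.dist_snd_path_lt (hne l (mem_filter.mpr ⟨hl, hlu⟩))

theorem exists_pairs_degree_eq_one_cover [Fintype V] [DecidableEq V] [DecidableRel G.Adj]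
    (h2 : 2 ≤ #{v | G.degree v = 1}) :
    ∃ ps : List (V × V), ps.length = (#{v | G.degree v = 1} + 1) / 2 ∧
      (∀ q ∈ ps, G.degree q.1 = 1 ∧ G.degree q.2 = 1) ∧
      ∀ v, ∃ q ∈ ps, v ∈ (hT.path q.1 q.2).support := by
  set L : Finset V := {v | G.degree v = 1}
  obtain ⟨a, ha, b, hb, hab⟩ := one_lt_card.mp h2
  have : Nontrivial V := nontrivial_of_ne a b hab
  obtain ⟨c, -, hc⟩ := exists_min_image univ (fun w => ∑ l ∈ L, G.dist w l) univ_nonempty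
  obtain ⟨ps, hlen, hcross⟩ := exists_isCrossPairing (fun l => (hT.path c l).snd) L
    (hT.two_mul_card_filter_snd_path_le h2 fun w => hc w (mem_univ w))
  refine ⟨ps, hlen, fun q hq => ?_, fun v => ?_⟩
  · obtain ⟨hq₁, hq₂, -⟩ := hcross.1 q hq
    exact ⟨(mem_filter.mp hq₁).2, (mem_filter.mp hq₂).2⟩
  obtain ⟨l, hl, hv⟩ := hT.exists_degree_eq_one_mem_support_path c v
  obtain ⟨q, hq, rfl | rfl⟩ := hcross.2 l (mem_filter.mpr ⟨mem_univ l, hl⟩)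
  · exact ⟨q, hq, hT.mem_support_path_of_snd_ne (hcross.1 q hq).2.2 (.inl hv)⟩
  · exact ⟨q, hq, hT.mem_support_path_of_snd_ne (hcross.1 q hq).2.2 (.inr hv)⟩

end IsTree

end SimpleGraph

section Cost

variable {V : Type} {G : SimpleGraph V} {bad : V → Prop} {tag : V → Finset Bool}

theorem one_le_pathCost {x y : V} (p : G.Walk x y) : 1 ≤ pathCost bad tag p := by
  unfold pathCost
  split_ifs <;> omega

theorem pathCost_eq_one_of_inter_nonempty {x y : V} (p : G.Walk x y)
    (h : (tag x ∩ tag y).Nonempty) : pathCost bad tag p = 1 := by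
  simp [pathCost, h]

theorem card_filter_degree_eq_one_le_two_mul [Fintype V] [DecidableRel G.Adj]
    (hleaf : ∀ v, G.degree v = 1 → bad v) {c : ℕ} (hc : c ∈ CoverCosts G bad tag) :
    #{v | G.degree v = 1} ≤ 2 * c := by
  classical
  obtain ⟨k, x, y, p, hp, hcov, rfl⟩ := hc
  have hends : ({v | G.degree v = 1} : Finset V) ⊆ univ.image x ∪ univ.image y := by
    intro v hv
    have hv := (mem_filter.mp hv).2
    obtain ⟨i, hi⟩ := hcov v (hleaf v hv)
    rcases (hp i).eq_or_eq_of_degree_eq_one hi hv with rfl | rfl <;> simp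
  have hcard := (card_le_card hends).trans (card_union_le _ _)
  have hx := card_image_le (s := univ) (f := x)
  have hy := card_image_le (s := univ) (f := y)
  have hsum := card_nsmul_le_sum univ (fun i => pathCost bad tag (p i)) 1
    fun i _ => one_le_pathCost (p i)
  simp only [card_univ, Fintype.card_fin, smul_eq_mul, mul_one] at hx hy hsum
  omega

theorem SimpleGraph.IsTree.length_mem_coverCosts (hT : G.IsTree) (ps : List (V × V))
    (htag : ∀ q ∈ ps, (tag q.1 ∩ tag q.2).Nonempty)
    (hcov : ∀ v, bad v → ∃ q ∈ ps, v ∈ (hT.path q.1 q.2).support) :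
    ps.length ∈ CoverCosts G bad tag := by
  refine ⟨ps.length, fun i => ps[i].1, fun i => ps[i].2, fun i => hT.path _ _,
    fun i => hT.isPath_path _ _, fun v hv => ?_, ?_⟩
  · obtain ⟨q, hq, hvq⟩ := hcov v hv
    obtain ⟨i, hi, rfl⟩ := List.getElem_of_mem hq
    exact ⟨⟨i, hi⟩, hvq⟩
  · rw [sum_congr rfl fun i _ =>
      pathCost_eq_one_of_inter_nonempty _ (htag _ (List.getElem_mem _))]
    simp

end Cost

theorem optimal_cover_cost_shared_tag_general {V : Type} [Fintype V]
    (G : SimpleGraph V) [DecidableRel G.Adj] (hT : G.IsTree)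
    (bad : V → Prop) (tag : V → Finset Bool)
    (hleafbad : ∀ v, G.degree v = 1 → bad v)
    (ℓ : ℕ) (hℓ : (Finset.univ.filter fun v => G.degree v = 1).card = ℓ) (h2 : 2 ≤ ℓ)
    (t : Bool) (ht : ∀ v, G.degree v = 1 → t ∈ tag v) :
    IsLeast (CoverCosts G bad tag) ((ℓ + 1) / 2) := by
  classical
  subst hℓ
  refine ⟨?_, fun c hc => ?_⟩
  · obtain ⟨ps, hlen, hleaf, hcov⟩ := hT.exists_pairs_degree_eq_one_cover h2
    rw [← hlen]
    exact hT.length_mem_coverCosts ps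
      (fun q hq => ⟨t, mem_inter.mpr ⟨ht _ (hleaf q hq).1, ht _ (hleaf q hq).2⟩⟩)
      fun v _ => hcov v
  · have := card_filter_degree_eq_one_le_two_mul hleafbad hc
    omega

/-- Let `T` be a tagged component tree (a finite tree whose nodes are
bad or good, each carrying a tag set; all leaves are bad) with `ℓ ≥ 2` leaves, all of
which share at least one tag `t`. Then the minimum total cost of a cover of the bad
nodes of `T` is `⌈ℓ/2⌉ = (ℓ+1)/2`. -/
theorem optimal_cover_cost_shared_tag {V : Type} [Fintype V] [DecidableEq V]
    (G : SimpleGraph V) [DecidableRel G.Adj] (hT : G.IsTree)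
    (bad : V → Prop) (tag : V → Finset Bool)
    (hleafbad : ∀ v, G.degree v = 1 → bad v)
    (ℓ : ℕ) (hℓ : (Finset.univ.filter fun v => G.degree v = 1).card = ℓ) (h2 : 2 ≤ ℓ)
    (t : Bool) (ht : ∀ v, G.degree v = 1 → t ∈ tag v) :
    IsLeast (CoverCosts G bad tag) ((ℓ + 1) / 2) :=
  optimal_cover_cost_shared_tag_general G hT bad tag hleafbad ℓ hℓ h2 t ht
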